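/- arXiv:1606.01048 — 5 statements merged into one kernel-verified Lean document; each statement's English description precedes it below -/
import Mathlib

section
/- For every integer k ≥ 0, the space of R^2-valued polynomial vector fields of degree at most k decomposes as the direct sum of the gradients of scalar polynomials of degree at most k+1 and the space of fields of the form x^⊥ p with p a scalar polynomial of degree at most k−1 (the latter space being {0} if k = 0). -/
open MvPolynomial

/-- `degLE p k` means `p ∈ P_k` where `k : ℤ` and `P_{-1} = {0}`. -/
def degLE2 (p : MvPolynomial (Fin 2) ℝ) (k : ℤ) : Prop :=
  p = 0 ∨ (p.totalDegree : ℤ) ≤ k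

/-- gradient of a bivariate polynomial -/
noncomputable def pgrad2 (φ : MvPolynomial (Fin 2) ℝ) : Fin 2 → MvPolynomial (Fin 2) ℝ :=
  fun i => pderiv i φ

/-- the field `x^⊥ p = (x₂ p, -x₁ p)` -/
noncomputable def xperp2 (p : MvPolynomial (Fin 2) ℝ) : Fin 2 → MvPolynomial (Fin 2) ℝ :=
  ![X 1 * p, -(X 0 * p)]

open Finsupp

noncomputable def scaleDeg (g : ℕ → ℝ) (q : MvPolynomial (Fin 2) ℝ) : MvPolynomial (Fin 2) ℝ :=
  Finsupp.sum (AddMonoidAlgebra.coeff q) fun a c => monomial a (g (a 0 + a 1) * c)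

lemma coeff_scaleDeg (g : ℕ → ℝ) (q : MvPolynomial (Fin 2) ℝ) (a : Fin 2 →₀ ℕ) :
    coeff a (scaleDeg g q) = g (a 0 + a 1) * coeff a q := by
  classical
  unfold scaleDeg
  rw [Finsupp.sum, MvPolynomial.coeff_sum]
  rw [Finset.sum_eq_single a (fun b _ hb => by rw [coeff_monomial, if_neg hb])
    (fun ha => by
      rw [coeff_monomial, if_pos rfl, Finsupp.notMem_support_iff.mp ha, mul_zero]), coeff_monomial, if_pos rfl]
  rfl

lemma coeff_pderiv (i : Fin 2) (f : MvPolynomial (Fin 2) ℝ) (a : Fin 2 →₀ ℕ) :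
    coeff a (pderiv i f) = ((a i : ℝ) + 1) * coeff (a + Finsupp.single i 1) f := by
  classical
  induction f using MvPolynomial.induction_on' with
  | monomial b c =>
      rw [pderiv_monomial, coeff_monomial, coeff_monomial]
      by_cases hb : b i = 0
      · have h2 : b ≠ a + Finsupp.single i 1 := by
          intro h; apply absurd hb; rw [h]; simp
        rw [if_neg h2, mul_zero]
        by_cases h3 : b - Finsupp.single i 1 = a
        · rw [if_pos h3]; simp [hb]
        · rw [if_neg h3]
      · by_cases hab : b = a + Finsupp.single i 1
        · subst hab
          have h3 : a + Finsupp.single i 1 - Finsupp.single i 1 = a := by simp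
          rw [if_pos h3, if_pos rfl]
          push_cast; simp; ring
        · have h3 : b - Finsupp.single i 1 ≠ a := by
            intro h; apply hab; rw [← h]
            ext j; rcases eq_or_ne j i with rfl | hj
            · simp only [Finsupp.coe_add, Pi.add_apply, Finsupp.coe_tsub, Pi.sub_apply,
                Finsupp.single_apply, if_pos rfl]
              simp only [if_true]
              omega
            · simp [Finsupp.single_apply, Ne.symm hj]
          rw [if_neg h3, if_neg hab, mul_zero]
  | add p q hp hq => simp [hp, hq, mul_add]
lemma fsum2 (a : Fin 2 →₀ ℕ) : (a.sum fun _ e => e) = a 0 + a 1 := by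
  rw [Finsupp.sum_fintype _ _ (fun _ => rfl)]
  exact Fin.sum_univ_two a

lemma addsingle2 (a : Fin 2 →₀ ℕ) (i : Fin 2) :
    ((a + Finsupp.single i 1 : Fin 2 →₀ ℕ)) 0 + ((a + Finsupp.single i 1 : Fin 2 →₀ ℕ)) 1
      = a 0 + a 1 + 1 := by
  fin_cases i <;> simp [Finsupp.add_apply, Finsupp.single_apply] <;> omega

lemma sub_add_single (a : Fin 2 →₀ ℕ) (i : Fin 2) (h : a i ≠ 0) :
    a - Finsupp.single i 1 + Finsupp.single i 1 = a := by
  ext j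
  rcases eq_or_ne i j with rfl | hj
  · simp only [Finsupp.add_apply, Finsupp.tsub_apply, Finsupp.single_eq_same]
    omega
  · simp [Finsupp.single_eq_of_ne' hj]
section
variable (g h : ℕ → ℝ) (q r : MvPolynomial (Fin 2) ℝ) (i : Fin 2)

lemma scaleDeg_add : scaleDeg g (q + r) = scaleDeg g q + scaleDeg g r := by
  ext a; simp [coeff_scaleDeg, mul_add]

lemma scaleDeg_zero : scaleDeg g 0 = 0 := by
  ext a; simp [coeff_scaleDeg]

lemma scaleDeg_scaleDeg : scaleDeg g (scaleDeg h q) = scaleDeg (fun d => g d * h d) q := by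
  ext a; simp [coeff_scaleDeg]; ring

lemma scaleDeg_one : scaleDeg (fun _ => 1) q = q := by
  ext a; simp [coeff_scaleDeg]

lemma scaleDeg_add_fun : scaleDeg g q + scaleDeg h q = scaleDeg (fun d => g d + h d) q := by
  ext a; simp [coeff_scaleDeg]; ring

lemma scaleDeg_neg : scaleDeg g (-q) = - scaleDeg g q := by
  ext a; simp [coeff_scaleDeg]

lemma pderiv_scaleDeg : pderiv i (scaleDeg g q) = scaleDeg (fun d => g (d + 1)) (pderiv i q) := by
  ext a
  rw [coeff_pderiv, coeff_scaleDeg, coeff_scaleDeg, coeff_pderiv, addsingle2]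
  ring

lemma euler : X 0 * pderiv 0 q + X 1 * pderiv 1 q = scaleDeg (fun d => (d : ℝ)) q := by
  classical
  ext a
  rw [coeff_add, coeff_X_mul', coeff_X_mul', coeff_scaleDeg]
  have key : ∀ i : Fin 2, (if i ∈ a.support then coeff (a - Finsupp.single i 1) (pderiv i q) else 0)
      = (a i : ℝ) * coeff a q := by
    intro i
    by_cases hi : a i = 0
    · rw [if_neg (by simp [hi]), hi]; simp
    · rw [if_pos (by simp [hi]), coeff_pderiv, sub_add_single a i hi]
      have : (((a - Finsupp.single i 1 : Fin 2 →₀ ℕ)) i : ℝ) + 1 = a i := by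
        rw [Finsupp.tsub_apply, Finsupp.single_eq_same]
        have := Nat.succ_pred_eq_of_pos (Nat.pos_of_ne_zero hi)
        push_cast [Nat.sub_one]
        exact_mod_cast congrArg (Nat.cast : ℕ → ℝ) this
      rw [this]
  rw [key 0, key 1]
  push_cast
  ring

lemma pderiv_comm' (f : MvPolynomial (Fin 2) ℝ) (i j : Fin 2) :
    pderiv i (pderiv j f) = pderiv j (pderiv i f) := by
  ext a
  rw [coeff_pderiv, coeff_pderiv, coeff_pderiv, coeff_pderiv]
  rcases eq_or_ne i j with rfl | hij
  · ring
  · have h1 : ((a + Finsupp.single i 1 : Fin 2 →₀ ℕ)) j = a j := by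
      simp [Finsupp.single_eq_of_ne' hij]
    have h2 : ((a + Finsupp.single j 1 : Fin 2 →₀ ℕ)) i = a i := by
      simp [Finsupp.single_eq_of_ne' (Ne.symm hij)]
    rw [h1, h2, add_right_comm]
    ring

lemma support_scaleDeg : (scaleDeg g q).support ⊆ q.support := by
  intro a ha
  rw [MvPolynomial.mem_support_iff] at ha ⊢
  intro h; apply ha; rw [coeff_scaleDeg, h, mul_zero]

lemma totalDegree_scaleDeg_le : (scaleDeg g q).totalDegree ≤ q.totalDegree := by
  apply Finset.sup_le
  intro a ha
  exact le_totalDegree (support_scaleDeg g q ha)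

lemma totalDegree_pderiv_lt (f : MvPolynomial (Fin 2) ℝ) (i : Fin 2) (h : pderiv i f ≠ 0) :
    (pderiv i f).totalDegree + 1 ≤ f.totalDegree := by
  obtain ⟨a, ha, hsup⟩ := Finset.exists_mem_eq_sup _ (support_nonempty.mpr h)
      (fun m : Fin 2 →₀ ℕ => m.sum fun _ e => e)
  rw [totalDegree, hsup]
  have hc : coeff (a + Finsupp.single i 1) f ≠ 0 := by
    intro hz
    rw [MvPolynomial.mem_support_iff, coeff_pderiv, hz, mul_zero] at ha
    exact ha rfl
  have := le_totalDegree (MvPolynomial.mem_support_iff.mpr hc)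
  rw [fsum2] at this ⊢
  rw [addsingle2] at this
  omega
end

-- curl of x^perp field
lemma curl_xperp (r : MvPolynomial (Fin 2) ℝ) :
    pderiv 0 (xperp2 r 1) - pderiv 1 (xperp2 r 0)
      = -(scaleDeg (fun d => (d : ℝ) + 2) r) := by
  show pderiv 0 (-(X 0 * r)) - pderiv 1 (X 1 * r) = _
  rw [map_neg, pderiv_mul, pderiv_mul, pderiv_X_self, pderiv_X_self]
  try rw [one_mul, one_mul]
  have h2 : r + r = scaleDeg (fun _ => (2:ℝ)) r := by
    ext a; simp [coeff_scaleDeg]; ring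
  have h3 : scaleDeg (fun _ => (2:ℝ)) r + scaleDeg (fun d => (d:ℝ)) r
      = scaleDeg (fun d => (d : ℝ) + 2) r := by
    rw [scaleDeg_add_fun]
    have : (fun d : ℕ => (2:ℝ) + (d:ℝ)) = fun d : ℕ => (d:ℝ) + 2 := by funext d; ring
    rw [this]
  linear_combination -euler r - h2 - h3

lemma curl_grad (φ : MvPolynomial (Fin 2) ℝ) :
    pderiv 0 (pgrad2 φ 1) - pderiv 1 (pgrad2 φ 0) = 0 := by
  show pderiv 0 (pderiv 1 φ) - pderiv 1 (pderiv 0 φ) = 0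
  rw [pderiv_comm', sub_self]

-- inverse of (D+2)
lemma inv_D2 (s : MvPolynomial (Fin 2) ℝ) :
    scaleDeg (fun d => ((d:ℝ) + 2)⁻¹) (scaleDeg (fun d => (d : ℝ) + 2) s) = s := by
  rw [scaleDeg_scaleDeg]
  have : (fun d : ℕ => ((d:ℝ) + 2)⁻¹ * ((d:ℝ) + 2)) = fun _ => (1:ℝ) := by
    funext d
    have : (d:ℝ) + 2 ≠ 0 := by positivity
    field_simp
  rw [this, scaleDeg_one]


/-- `(P_k)² = grad(P_{k+1}) ⊕ x^⊥ P_{k-1}` (direct sum decomposition). -/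
theorem decomp_Pk2_grad_xperp (k : ℕ) (v : Fin 2 → MvPolynomial (Fin 2) ℝ)
    (hv : ∀ i, (v i).totalDegree ≤ k) :
    ∃! gw : (Fin 2 → MvPolynomial (Fin 2) ℝ) × (Fin 2 → MvPolynomial (Fin 2) ℝ),
      (∃ φ : MvPolynomial (Fin 2) ℝ, φ.totalDegree ≤ k + 1 ∧ gw.1 = pgrad2 φ) ∧
      (∃ p : MvPolynomial (Fin 2) ℝ, degLE2 p ((k : ℤ) - 1) ∧ gw.2 = xperp2 p) ∧
      v = gw.1 + gw.2 := by
  classical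
  set curlv : MvPolynomial (Fin 2) ℝ := pderiv 0 (v 1) - pderiv 1 (v 0) with hcurlv
  set p : MvPolynomial (Fin 2) ℝ :=
    scaleDeg (fun d => -(((d:ℝ) + 2)⁻¹)) curlv with hp
  -- degree bound on curlv
  have hcdeg : curlv = 0 ∨ (curlv.totalDegree : ℤ) ≤ (k : ℤ) - 1 := by
    have h01 : pderiv 0 (v 1) = 0 ∨ ((pderiv 0 (v 1)).totalDegree : ℤ) ≤ (k:ℤ) - 1 := by
      by_cases h : pderiv 0 (v 1) = 0
      · exact Or.inl h
      · right
        have h1 := totalDegree_pderiv_lt (v 1) 0 h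
        have h2 := hv 1
        omega
    have h10 : pderiv 1 (v 0) = 0 ∨ ((pderiv 1 (v 0)).totalDegree : ℤ) ≤ (k:ℤ) - 1 := by
      by_cases h : pderiv 1 (v 0) = 0
      · exact Or.inl h
      · right
        have h1 := totalDegree_pderiv_lt (v 0) 1 h
        have h2 := hv 0
        omega
    rcases h01 with h01 | h01 <;> rcases h10 with h10 | h10
    · left; rw [hcurlv, h01, h10, sub_zero]
    · right; rw [hcurlv, h01, zero_sub, totalDegree_neg]; exact h10
    · right; rw [hcurlv, h10, sub_zero]; exact h01
    · right
      have := totalDegree_sub (pderiv 0 (v 1)) (pderiv 1 (v 0))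
      rw [← hcurlv] at this
      omega
  have hpdeg : degLE2 p ((k:ℤ) - 1) := by
    rcases hcdeg with h | h
    · left; rw [hp, h, scaleDeg_zero]
    · right
      have := totalDegree_scaleDeg_le (fun d => -(((d:ℝ) + 2)⁻¹)) curlv
      rw [← hp] at this
      omega
  -- key identity: scaleDeg (d+2) p = -curlv
  have hDp : scaleDeg (fun d => (d : ℝ) + 2) p = -curlv := by
    rw [hp, scaleDeg_scaleDeg]
    have : (fun d : ℕ => ((d:ℝ) + 2) * -(((d:ℝ) + 2)⁻¹)) = fun _ => (-1:ℝ) := by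
      funext d
      have : (d:ℝ) + 2 ≠ 0 := by positivity
      field_simp
    rw [this]
    ext a; simp [coeff_scaleDeg]
  set w : Fin 2 → MvPolynomial (Fin 2) ℝ := fun i => v i - xperp2 p i with hw
  -- curl w = 0
  have hcw : pderiv 0 (w 1) = pderiv 1 (w 0) := by
    have h1 : pderiv 0 (w 1) - pderiv 1 (w 0) = 0 := by
      have : pderiv 0 (w 1) - pderiv 1 (w 0)
          = curlv - (pderiv 0 (xperp2 p 1) - pderiv 1 (xperp2 p 0)) := by
        simp only [hw, map_sub, hcurlv]; ring
      rw [this, curl_xperp, hDp]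
      ring
    exact sub_eq_zero.mp h1
  set qq : MvPolynomial (Fin 2) ℝ := X 0 * w 0 + X 1 * w 1 with hqq
  set phi : MvPolynomial (Fin 2) ℝ := scaleDeg (fun d => ((d:ℝ))⁻¹) qq with hphi
  -- partial derivatives of qq
  have hdq0 : pderiv 0 qq = w 0 + scaleDeg (fun d => (d:ℝ)) (w 0) := by
    have : pderiv 0 qq = (w 0 + X 0 * pderiv 0 (w 0)) + X 1 * pderiv 0 (w 1) := by
      rw [hqq, map_add, pderiv_mul, pderiv_mul, pderiv_X_self,
        pderiv_X_of_ne (by decide : (1 : Fin 2) ≠ 0)]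
      ring
    rw [this, hcw, ← euler (w 0)]
    ring
  have hdq1 : pderiv 1 qq = w 1 + scaleDeg (fun d => (d:ℝ)) (w 1) := by
    have : pderiv 1 qq = X 0 * pderiv 1 (w 0) + (w 1 + X 1 * pderiv 1 (w 1)) := by
      rw [hqq, map_add, pderiv_mul, pderiv_mul, pderiv_X_self,
        pderiv_X_of_ne (by decide : (0 : Fin 2) ≠ 1)]
      ring
    rw [this, ← hcw, ← euler (w 1)]
    ring
  have hdq : ∀ i, pderiv i qq = w i + scaleDeg (fun d => (d:ℝ)) (w i) := by
    intro i
    fin_cases i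
    · exact hdq0
    · exact hdq1
  -- gradient of phi is w
  have hgrad : ∀ i, pderiv i phi = w i := by
    intro i
    rw [hphi, pderiv_scaleDeg, hdq i, scaleDeg_add, scaleDeg_scaleDeg, scaleDeg_add_fun]
    have : (fun d : ℕ => ((((d:ℕ) + 1 : ℕ)):ℝ)⁻¹ + ((((d:ℕ) + 1 : ℕ)):ℝ)⁻¹ * (d:ℝ))
        = fun _ : ℕ => (1:ℝ) := by
      funext d
      have h1 : (d:ℝ) + 1 ≠ 0 := by positivity
      push_cast
      field_simp
      ring
    rw [this, scaleDeg_one]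
  -- degree bound on phi
  have hwd : ∀ i, (w i).totalDegree ≤ k := by
    intro i
    have hx : (xperp2 p i).totalDegree ≤ k := by
      rcases hpdeg with h | h
      · fin_cases i <;> simp [xperp2, h, totalDegree_neg]
      · have hk : 1 ≤ k := by
          have : (0:ℤ) ≤ (p.totalDegree : ℤ) := Int.ofNat_nonneg _
          omega
        have hpk : p.totalDegree ≤ k - 1 := by omega
        have hX : ∀ j : Fin 2, (X j * p : MvPolynomial (Fin 2) ℝ).totalDegree ≤ k := by
          intro j
          calc (X j * p : MvPolynomial (Fin 2) ℝ).totalDegree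
              ≤ (X j : MvPolynomial (Fin 2) ℝ).totalDegree + p.totalDegree :=
                totalDegree_mul _ _
            _ ≤ 1 + (k - 1) := by rw [totalDegree_X]; omega
            _ ≤ k := by omega
        fin_cases i
        · exact hX 1
        · show (-(X 0 * p) : MvPolynomial (Fin 2) ℝ).totalDegree ≤ k
          rw [totalDegree_neg]; exact hX 0
    calc (w i).totalDegree ≤ max (v i).totalDegree (xperp2 p i).totalDegree :=
          totalDegree_sub _ _
      _ ≤ k := max_le (hv i) hx
  have hphideg : phi.totalDegree ≤ k + 1 := by
    have h0 : (X 0 * w 0 : MvPolynomial (Fin 2) ℝ).totalDegree ≤ k + 1 := by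
      calc (X 0 * w 0 : MvPolynomial (Fin 2) ℝ).totalDegree
          ≤ (X 0 : MvPolynomial (Fin 2) ℝ).totalDegree + (w 0).totalDegree :=
            totalDegree_mul _ _
        _ ≤ 1 + k := by rw [totalDegree_X]; have := hwd 0; omega
        _ = k + 1 := by omega
    have h1 : (X 1 * w 1 : MvPolynomial (Fin 2) ℝ).totalDegree ≤ k + 1 := by
      calc (X 1 * w 1 : MvPolynomial (Fin 2) ℝ).totalDegree
          ≤ (X 1 : MvPolynomial (Fin 2) ℝ).totalDegree + (w 1).totalDegree :=
            totalDegree_mul _ _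
        _ ≤ 1 + k := by rw [totalDegree_X]; have := hwd 1; omega
        _ = k + 1 := by omega
    calc phi.totalDegree ≤ qq.totalDegree := totalDegree_scaleDeg_le _ _
      _ ≤ max (X 0 * w 0 : MvPolynomial (Fin 2) ℝ).totalDegree
            (X 1 * w 1 : MvPolynomial (Fin 2) ℝ).totalDegree := totalDegree_add _ _
      _ ≤ k + 1 := max_le h0 h1
  -- the decomposition
  have hsum : v = pgrad2 phi + xperp2 p := by
    funext i
    have := hgrad i
    show v i = pderiv i phi + xperp2 p i
    rw [this, hw]
    ring
  refine ⟨(pgrad2 phi, xperp2 p), ⟨⟨phi, hphideg, rfl⟩, ⟨p, hpdeg, rfl⟩, hsum⟩, ?_⟩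
  -- uniqueness
  rintro ⟨g', w'⟩ ⟨⟨φ', _, hg'⟩, ⟨p', _, hw'⟩, hsum'⟩
  change g' = pgrad2 φ' at hg'
  change w' = xperp2 p' at hw'
  change v = g' + w' at hsum'
  have hcurl' : curlv = -(scaleDeg (fun d => (d : ℝ) + 2) p') := by
    have hv0 : v 0 = g' 0 + w' 0 := by rw [hsum']; rfl
    have hv1 : v 1 = g' 1 + w' 1 := by rw [hsum']; rfl
    have : curlv = (pderiv 0 (g' 1) - pderiv 1 (g' 0)) + (pderiv 0 (w' 1) - pderiv 1 (w' 0)) := by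
      rw [hcurlv, hv0, hv1, map_add, map_add]; ring
    rw [this, hg', hw', curl_grad, curl_xperp]
    ring
  have hpp : p' = p := by
    have h1 : scaleDeg (fun d => (d : ℝ) + 2) p' = scaleDeg (fun d => (d : ℝ) + 2) p := by
      rw [hDp]
      rw [hcurl']
      ring
    have := congrArg (scaleDeg (fun d => ((d:ℝ) + 2)⁻¹)) h1
    rwa [inv_D2, inv_D2] at this
  have hw2 : w' = xperp2 p := by rw [hw', hpp]
  have hg2 : g' = pgrad2 phi := by
    funext i
    have e1 : v i = g' i + w' i := by rw [hsum']; rfl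
    have e2 : v i = pgrad2 phi i + xperp2 p i := by rw [hsum]; rfl
    have e3 : w' i = xperp2 p i := by rw [hw2]
    linear_combination e2 - e1 - e3
  rw [Prod.mk.injEq]
  exact ⟨hg2, hw2⟩
end

section
/- For every integer s ≥ 0 and every bivariate polynomial p_s of degree at most s, there exists a unique polynomial q_s of degree at most s such that rot(x^⊥ q_s) = p_s, where rot(v₁,v₂) = ∂v₂/∂x − ∂v₁/∂y and x^⊥ = (x₂, -x₁). -/
open MvPolynomial

private lemma Lmono (i : Fin 2) (u : Fin 2 →₀ ℕ) (c : ℝ) :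
    pderiv i (X i * monomial u c) = monomial u ((u i + 1) * c) := by
  rw [show (X i : MvPolynomial (Fin 2) ℝ) * monomial u c
      = monomial (u + Finsupp.single i 1) c by
    rw [X, monomial_mul, one_mul, add_comm], pderiv_monomial]
  simp [Finsupp.add_apply]
  ring_nf

private lemma coeffL (f : MvPolynomial (Fin 2) ℝ) (a : Fin 2 →₀ ℕ) :
    coeff a (pderiv 0 (-(X 0 * f)) - pderiv 1 (X 1 * f))
      = -((2:ℝ) + a 0 + a 1) * coeff a f := by
  induction f using MvPolynomial.induction_on' with
  | monomial u c =>
      rw [map_neg, Lmono, Lmono]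
      simp only [coeff_sub, coeff_neg, coeff_monomial]
      split
      · next h => subst h; ring
      · simp
  | add p q hp hq =>
      rw [mul_add, mul_add, neg_add, map_add, map_add]
      simp only [coeff_sub, coeff_add] at *
      ring_nf at *
      linarith [hp, hq]

/-- for every `p_s ∈ P_s` there is a unique `q_s ∈ P_s` with
`rot(x^⊥ q_s) = p_s`, where `rot(v₁,v₂) = ∂v₂/∂x - ∂v₁/∂y` and `x^⊥ = (x₂,-x₁)`. -/
theorem exists_unique_rot_xperp (s : ℕ) (p : MvPolynomial (Fin 2) ℝ)
    (hp : p.totalDegree ≤ s) :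
    ∃! q : MvPolynomial (Fin 2) ℝ, q.totalDegree ≤ s ∧
      pderiv 0 (-(X 0 * q)) - pderiv 1 (X 1 * q) = p := by
  have hne : ∀ a : Fin 2 →₀ ℕ, (-((2:ℝ) + a 0 + a 1)) ≠ 0 := by
    intro a
    have h0 : (0:ℝ) ≤ (a 0 : ℝ) := Nat.cast_nonneg _
    have h1 : (0:ℝ) ≤ (a 1 : ℝ) := Nat.cast_nonneg _
    intro h; nlinarith
  set q : MvPolynomial (Fin 2) ℝ :=
    ∑ a ∈ p.support, monomial a ((-((2:ℝ) + a 0 + a 1))⁻¹ * p.coeff a) with hq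
  have hcq : ∀ b : Fin 2 →₀ ℕ,
      coeff b q = (-((2:ℝ) + b 0 + b 1))⁻¹ * p.coeff b := by
    intro b
    rw [hq, coeff_sum]
    by_cases hb : b ∈ p.support
    · rw [Finset.sum_eq_single b]
      · simp [coeff_monomial]
      · intro c _ hcb; simp [coeff_monomial, hcb]
      · intro h; exact absurd hb h
    · have hb0 : p.coeff b = 0 := by simpa using hb
      rw [hb0, mul_zero]
      apply Finset.sum_eq_zero
      intro c hc
      rw [coeff_monomial]
      split
      · next h => exact absurd (h ▸ hc) hb
      · rfl
  refine ⟨q, ⟨?_, ?_⟩, ?_⟩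
  · calc q.totalDegree ≤ p.support.sup fun a =>
          (monomial a ((-((2:ℝ) + a 0 + a 1))⁻¹ * p.coeff a)).totalDegree :=
            totalDegree_finset_sum _ _
      _ ≤ s := by
          apply Finset.sup_le
          intro a ha
          refine le_trans (totalDegree_monomial_le _ _) (le_trans ?_ hp)
          exact le_totalDegree ha
  · ext b
    rw [coeffL, hcq, ← mul_assoc, mul_inv_cancel₀ (hne b), one_mul]
  · rintro r ⟨-, hr⟩
    ext b
    have h1 : -((2:ℝ) + b 0 + b 1) * coeff b r = p.coeff b := by
      rw [← coeffL, hr]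
    rw [hcq, ← h1, ← mul_assoc, inv_mul_cancel₀ (hne b), one_mul]
end

section
/- For every integer s ≥ 0 and every bivariate polynomial p_s of degree at most s, there exists a unique polynomial q_s of degree at most s such that div(x q_s) = p_s, where x = (x₁, x₂) is the position vector field. -/
open MvPolynomial Finsupp

lemma key_mono (i : Fin 2) (α : Fin 2 →₀ ℕ) (c : ℝ) :
    pderiv i (X i * monomial α c) = monomial α (c * (α i + 1)) := by
  rw [X, monomial_mul, one_mul, pderiv_monomial, add_tsub_cancel_left]
  congr 1
  simp only [Finsupp.add_apply, Finsupp.single_apply, if_pos rfl]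
  push_cast; ring

lemma coeff_L (r : MvPolynomial (Fin 2) ℝ) (α : Fin 2 →₀ ℕ) :
    coeff α (pderiv 0 (X 0 * r) + pderiv 1 (X 1 * r))
      = coeff α r * ((α 0 : ℝ) + α 1 + 2) := by
  conv_lhs => rw [← r.support_sum_monomial_coeff]
  rw [Finset.mul_sum, Finset.mul_sum, map_sum, map_sum, ← Finset.sum_add_distrib]
  simp only [key_mono]
  rw [coeff_sum]
  simp only [coeff_add, coeff_monomial]
  rw [Finset.sum_add_distrib, Finset.sum_ite_eq', Finset.sum_ite_eq']
  by_cases h : α ∈ r.support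
  · rw [if_pos h, if_pos h]; ring
  · rw [if_neg h, if_neg h, MvPolynomial.notMem_support_iff.mp h]; ring

/-- for every `p_s ∈ P_s` there is a unique `q_s ∈ P_s` with
`div(x q_s) = p_s`. -/
theorem exists_unique_div_x (s : ℕ) (p : MvPolynomial (Fin 2) ℝ)
    (hp : p.totalDegree ≤ s) :
    ∃! q : MvPolynomial (Fin 2) ℝ, q.totalDegree ≤ s ∧
      pderiv 0 (X 0 * q) + pderiv 1 (X 1 * q) = p := by
  set q : MvPolynomial (Fin 2) ℝ :=
    ∑ α ∈ p.support, monomial α (coeff α p / ((α 0 : ℝ) + α 1 + 2)) with hq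
  have hd : ∀ α : Fin 2 →₀ ℕ, ((α 0 : ℝ) + α 1 + 2) ≠ 0 := fun α => by positivity
  have hcq : ∀ β : Fin 2 →₀ ℕ, coeff β q = coeff β p / ((β 0 : ℝ) + β 1 + 2) := by
    intro β
    rw [hq, coeff_sum]
    simp only [coeff_monomial, Finset.sum_ite_eq']
    by_cases h : β ∈ p.support
    · rw [if_pos h]
    · rw [if_neg h, MvPolynomial.notMem_support_iff.mp h, zero_div]
  have hLq : pderiv 0 (X 0 * q) + pderiv 1 (X 1 * q) = p := by
    ext β
    rw [coeff_L, hcq, div_mul_cancel₀ _ (hd β)]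
  refine ⟨q, ⟨?_, hLq⟩, ?_⟩
  · refine le_trans (totalDegree_finset_sum _ _) (Finset.sup_le fun α hα => ?_)
    exact le_trans (totalDegree_monomial_le _ _) (le_trans (le_totalDegree hα) hp)
  · rintro q' ⟨-, hq'⟩
    ext β
    have h1 := congrArg (coeff β) (hq'.trans hLq.symm)
    rw [coeff_L, coeff_L] at h1
    exact mul_right_cancel₀ (hd β) h1
end

section
/- For every integer k ≥ 0, the space of R^3-valued polynomial vector fields of degree at most k decomposes as the direct sum of curl((P_{k+1})^3) and x·P_{k-1} (fields of the form x p with p a trivariate scalar polynomial of degree at most k−1). -/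
open MvPolynomial

/-- `degLE p k` means `p ∈ P_k` where `k : ℤ` and `P_{-1} = {0}`. -/
def degLE3 (p : MvPolynomial (Fin 3) ℝ) (k : ℤ) : Prop :=
  p = 0 ∨ (p.totalDegree : ℤ) ≤ k

/-- the curl of a trivariate polynomial vector field -/
noncomputable def pcurl3 (q : Fin 3 → MvPolynomial (Fin 3) ℝ) : Fin 3 → MvPolynomial (Fin 3) ℝ :=
  ![pderiv 1 (q 2) - pderiv 2 (q 1),
    pderiv 2 (q 0) - pderiv 0 (q 2),
    pderiv 0 (q 1) - pderiv 1 (q 0)]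

/-- the field `x p` -/
noncomputable def xmul3 (p : MvPolynomial (Fin 3) ℝ) : Fin 3 → MvPolynomial (Fin 3) ℝ :=
  fun i => X i * p

theorem pderiv_comm3 (i j : Fin 3) (f : MvPolynomial (Fin 3) ℝ) :
    pderiv i (pderiv j f) = pderiv j (pderiv i f) := by
  induction f using MvPolynomial.induction_on' with
  | monomial d a =>
    rcases eq_or_ne i j with rfl | hij
    · rfl
    · simp only [pderiv_monomial]
      have h1 : (d - Finsupp.single j 1 : Fin 3 →₀ ℕ) i = d i := by
        simp only [Finsupp.tsub_apply, Finsupp.single_apply, if_neg hij.symm, tsub_zero]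
      have h2 : (d - Finsupp.single i 1 : Fin 3 →₀ ℕ) j = d j := by
        simp only [Finsupp.tsub_apply, Finsupp.single_apply, if_neg hij, tsub_zero]
      have hidx : d - Finsupp.single j 1 - Finsupp.single i 1
          = d - Finsupp.single i 1 - Finsupp.single j 1 := by
        ext k; simp only [Finsupp.coe_tsub, Pi.sub_apply]; exact tsub_right_comm
      rw [hidx, h1, h2]; ring_nf
  | add p q hp hq => simp [map_add, hp, hq]

/-- weighted degree of a monomial exponent -/
def wdeg (d : Fin 3 →₀ ℕ) : ℕ := ∑ i, d i

/-- Euler operator `∑ xᵢ ∂ᵢ` -/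
noncomputable def Eop (f : MvPolynomial (Fin 3) ℝ) : MvPolynomial (Fin 3) ℝ :=
  X 0 * pderiv 0 f + X 1 * pderiv 1 f + X 2 * pderiv 2 f

/-- inverse of `Eop + c` -/
noncomputable def invE (c : ℕ) (f : MvPolynomial (Fin 3) ℝ) : MvPolynomial (Fin 3) ℝ :=
  ∑ d ∈ f.support, monomial d (coeff d f / (wdeg d + c))

theorem coeff_invE (c : ℕ) (f : MvPolynomial (Fin 3) ℝ) (e : Fin 3 →₀ ℕ) :
    coeff e (invE c f) = coeff e f / (wdeg e + c) := by
  rw [invE, MvPolynomial.coeff_sum]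
  simp only [coeff_monomial]
  rw [Finset.sum_ite_eq' f.support e (fun d => coeff d f / (wdeg d + c))]
  by_cases h : e ∈ f.support
  · rw [if_pos h]
  · rw [if_neg h, MvPolynomial.notMem_support_iff.1 h, zero_div]

theorem invE_add (c : ℕ) (f g : MvPolynomial (Fin 3) ℝ) :
    invE c (f + g) = invE c f + invE c g := by
  apply MvPolynomial.ext; intro e
  simp only [coeff_invE, coeff_add, add_div]

theorem invE_smul (c : ℕ) (r : ℝ) (f : MvPolynomial (Fin 3) ℝ) :
    invE c (r • f) = r • invE c f := by
  apply MvPolynomial.ext; intro e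
  simp only [coeff_invE, coeff_smul, smul_eq_mul, mul_div_assoc]

theorem invE_zero (c : ℕ) : invE c (0 : MvPolynomial (Fin 3) ℝ) = 0 := by
  apply MvPolynomial.ext; intro e
  simp only [coeff_invE, coeff_zero, zero_div]

theorem invE_monomial (c : ℕ) (d : Fin 3 →₀ ℕ) (a : ℝ) :
    invE c (monomial d a) = monomial d (a / (wdeg d + c)) := by
  apply MvPolynomial.ext; intro e
  simp only [coeff_invE, coeff_monomial]
  split_ifs with h
  · subst h; rfl
  · exact zero_div _

theorem X_mul_pderiv_monomial (i : Fin 3) (d : Fin 3 →₀ ℕ) (a : ℝ) :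
    X i * pderiv i (monomial d a) = monomial d (a * d i) := by
  rw [pderiv_monomial]
  rcases Nat.eq_zero_or_pos (d i) with h | h
  · simp [h]
  · rw [X, monomial_mul, one_mul]
    have hidx : Finsupp.single i 1 + (d - Finsupp.single i 1) = d := by
      ext k
      simp only [Finsupp.add_apply, Finsupp.tsub_apply, Finsupp.single_apply]
      rcases eq_or_ne i k with rfl | hik
      · rw [if_pos rfl]; omega
      · rw [if_neg hik]; omega
    rw [hidx]

theorem Eop_monomial (d : Fin 3 →₀ ℕ) (a : ℝ) :
    Eop (monomial d a) = monomial d (a * wdeg d) := by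
  rw [Eop, X_mul_pderiv_monomial, X_mul_pderiv_monomial, X_mul_pderiv_monomial, ← map_add, ← map_add]
  congr 1
  have : wdeg d = d 0 + d 1 + d 2 := by rw [wdeg, Fin.sum_univ_three]
  rw [this]; push_cast; ring

theorem Eop_add (f g : MvPolynomial (Fin 3) ℝ) : Eop (f + g) = Eop f + Eop g := by
  simp only [Eop, map_add]; ring


theorem wdeg_nonneg_real (d : Fin 3 →₀ ℕ) {c : ℕ} (hc : 1 ≤ c) : ((wdeg d : ℝ) + c) ≠ 0 := by
  have h1 : (1:ℝ) ≤ (c:ℝ) := by exact_mod_cast hc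
  have h2 : (0:ℝ) ≤ (wdeg d : ℝ) := Nat.cast_nonneg _
  linarith

theorem key1 {c : ℕ} (hc : 1 ≤ c) (f : MvPolynomial (Fin 3) ℝ) :
    Eop (invE c f) + (c : ℝ) • invE c f = f := by
  induction f using MvPolynomial.induction_on' with
  | monomial d a =>
    rw [invE_monomial, Eop_monomial, smul_monomial, ← map_add]
    have hK := wdeg_nonneg_real d hc
    congr 1
    rw [smul_eq_mul,
      show a / ((wdeg d:ℝ) + c) * wdeg d + (c:ℝ) * (a / ((wdeg d:ℝ) + c))
        = a * ((wdeg d:ℝ) + c) / ((wdeg d:ℝ) + c) by ring,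
      mul_div_assoc, div_self hK, mul_one]
  | add p q hp hq =>
    rw [invE_add, Eop_add, smul_add]
    rw [show Eop (invE c p) + Eop (invE c q) + ((c:ℝ) • invE c p + (c:ℝ) • invE c q)
      = (Eop (invE c p) + (c:ℝ) • invE c p) + (Eop (invE c q) + (c:ℝ) • invE c q) by ring, hp, hq]

theorem key2 {c : ℕ} (hc : 1 ≤ c) (f : MvPolynomial (Fin 3) ℝ) :
    invE c (Eop f) + (c : ℝ) • invE c f = f := by
  induction f using MvPolynomial.induction_on' with
  | monomial d a =>
    rw [Eop_monomial, invE_monomial, invE_monomial, smul_monomial, ← map_add]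
    have hK := wdeg_nonneg_real d hc
    congr 1
    rw [smul_eq_mul,
      show a * (wdeg d:ℝ) / ((wdeg d:ℝ) + c) + (c:ℝ) * (a / ((wdeg d:ℝ) + c))
        = a * ((wdeg d:ℝ) + c) / ((wdeg d:ℝ) + c) by ring,
      mul_div_assoc, div_self hK, mul_one]
  | add p q hp hq =>
    rw [Eop_add, invE_add, invE_add, smul_add]
    rw [show invE c (Eop p) + invE c (Eop q) + ((c:ℝ) • invE c p + (c:ℝ) • invE c q)
      = (invE c (Eop p) + (c:ℝ) • invE c p) + (invE c (Eop q) + (c:ℝ) • invE c q) by ring, hp, hq]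

theorem wdeg_add (a b : Fin 3 →₀ ℕ) : wdeg (a + b) = wdeg a + wdeg b := by
  simp [wdeg, Finsupp.add_apply, Finset.sum_add_distrib]

theorem wdeg_sub_single {d : Fin 3 →₀ ℕ} {i : Fin 3} (h : 0 < d i) :
    wdeg (d - Finsupp.single i 1) + 1 = wdeg d := by
  have hd : d = (d - Finsupp.single i 1) + Finsupp.single i 1 := by
    ext k
    simp only [Finsupp.add_apply, Finsupp.tsub_apply, Finsupp.single_apply]
    rcases eq_or_ne i k with rfl | hik
    · rw [if_pos rfl]; omega
    · rw [if_neg hik]; omega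
  conv_rhs => rw [hd]
  rw [wdeg_add]
  congr 1
  simp [wdeg, Finsupp.single_apply]

theorem pderiv_invE {c : ℕ} (hc : 1 ≤ c) (i : Fin 3) (f : MvPolynomial (Fin 3) ℝ) :
    pderiv i (invE c f) = invE (c + 1) (pderiv i f) := by
  induction f using MvPolynomial.induction_on' with
  | monomial d a =>
    rw [invE_monomial, pderiv_monomial, pderiv_monomial, invE_monomial]
    rcases Nat.eq_zero_or_pos (d i) with h | h
    · simp [h]
    · have hw : wdeg (d - Finsupp.single i 1) + 1 = wdeg d := wdeg_sub_single h
      congr 1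
      have hcast : ((wdeg (d - Finsupp.single i 1) : ℝ)) + ((c:ℕ) + 1 : ℕ) = (wdeg d : ℝ) + c := by
        push_cast; rw [← hw]; push_cast; ring
      rw [hcast, div_mul_eq_mul_div]
  | add p q hp hq => rw [invE_add, map_add, map_add, invE_add, hp, hq]

theorem wdeg_eq_sum (d : Fin 3 →₀ ℕ) : (d.sum fun _ e => e) = wdeg d :=
  Finsupp.sum_fintype d (fun _ e => e) (fun _ => rfl)

theorem totalDegree_invE_le (c : ℕ) (f : MvPolynomial (Fin 3) ℝ) :
    (invE c f).totalDegree ≤ f.totalDegree := by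
  apply Finset.sup_mono
  intro d hd
  rw [MvPolynomial.mem_support_iff] at hd ⊢
  intro h0
  rw [coeff_invE, h0, zero_div] at hd
  exact hd rfl

theorem degLE3_zero (n : ℤ) : degLE3 0 n := Or.inl rfl

theorem degLE3_add {f g : MvPolynomial (Fin 3) ℝ} {n : ℤ} (hf : degLE3 f n) (hg : degLE3 g n) :
    degLE3 (f + g) n := by
  rcases hf with rfl | hf
  · simpa using hg
  rcases hg with rfl | hg
  · rw [add_zero]; exact Or.inr hf
  right
  calc ((f + g).totalDegree : ℤ) ≤ ((max f.totalDegree g.totalDegree : ℕ) : ℤ) := by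
        exact_mod_cast totalDegree_add f g
    _ ≤ n := by
        rw [Nat.cast_max]; exact max_le hf hg

theorem degLE3_invE {c : ℕ} {f : MvPolynomial (Fin 3) ℝ} {n : ℤ} (hf : degLE3 f n) :
    degLE3 (invE c f) n := by
  rcases hf with rfl | hf
  · exact Or.inl (invE_zero c)
  · right
    exact le_trans (by exact_mod_cast totalDegree_invE_le c f) hf

theorem degLE3_monomial (d : Fin 3 →₀ ℕ) (a : ℝ) {n : ℤ} (h : (wdeg d : ℤ) ≤ n) :
    degLE3 (monomial d a) n := by
  right
  calc ((monomial d a).totalDegree : ℤ) ≤ ((d.sum fun _ e => e : ℕ) : ℤ) := by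
        exact_mod_cast totalDegree_monomial_le d a
    _ = (wdeg d : ℤ) := by rw [wdeg_eq_sum]
    _ ≤ n := h

theorem degLE3_pderiv {f : MvPolynomial (Fin 3) ℝ} {n : ℤ} (i : Fin 3) (hf : degLE3 f n) :
    degLE3 (pderiv i f) (n - 1) := by
  rcases hf with rfl | hf
  · rw [map_zero]; exact degLE3_zero _
  · conv_lhs => rw [f.as_sum]
    rw [map_sum]
    have : ∀ d ∈ f.support, degLE3 (pderiv i (monomial d (coeff d f))) (n - 1) := by
      intro d hd
      rw [pderiv_monomial]
      rcases Nat.eq_zero_or_pos (d i) with h | h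
      · rw [h]; norm_num; exact degLE3_zero _
      · apply degLE3_monomial
        have h1 : wdeg (d - Finsupp.single i 1) + 1 = wdeg d := wdeg_sub_single h
        have h2 : wdeg d ≤ f.totalDegree := by
          rw [← wdeg_eq_sum]; exact le_totalDegree hd
        omega
    -- sum of degLE3
    revert this
    generalize f.support = s
    intro hs
    induction s using Finset.induction_on with
    | empty => simpa using degLE3_zero (n-1)
    | insert _ _ hnotmem ih =>
      rw [Finset.sum_insert hnotmem]
      exact degLE3_add (hs _ (Finset.mem_insert_self _ _))
        (ih fun d hd => hs d (Finset.mem_insert_of_mem hd))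

theorem Eop_sub (f g : MvPolynomial (Fin 3) ℝ) : Eop (f - g) = Eop f - Eop g := by
  simp only [Eop, map_sub]; ring

theorem invE_neg (c : ℕ) (f : MvPolynomial (Fin 3) ℝ) : invE c (-f) = - invE c f := by
  have := invE_smul c (-1) f; simpa using this

theorem cancel3 (r : MvPolynomial (Fin 3) ℝ) (h : Eop r + (r + r + r) = 0) : r = 0 := by
  have h2 := key2 (c := 3) (by norm_num) r
  have h3 : Eop r = -(r + r + r) := by linear_combination h
  rw [h3, invE_neg, invE_add, invE_add,
    show ((3:ℕ):ℝ) = 1 + 1 + 1 by norm_num, add_smul, add_smul, one_smul] at h2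
  linear_combination -h2

theorem Div_pcurl3 (q : Fin 3 → MvPolynomial (Fin 3) ℝ) :
    pderiv 0 (pcurl3 q 0) + pderiv 1 (pcurl3 q 1) + pderiv 2 (pcurl3 q 2) = 0 := by
  have e0 : pcurl3 q 0 = pderiv 1 (q 2) - pderiv 2 (q 1) := rfl
  have e1 : pcurl3 q 1 = pderiv 2 (q 0) - pderiv 0 (q 2) := rfl
  have e2 : pcurl3 q 2 = pderiv 0 (q 1) - pderiv 1 (q 0) := rfl
  rw [e0, e1, e2, map_sub, map_sub, map_sub,
    pderiv_comm3 0 1 (q 2), pderiv_comm3 0 2 (q 1), pderiv_comm3 1 2 (q 0)]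
  ring

theorem Div_xmul3 (p : MvPolynomial (Fin 3) ℝ) :
    pderiv 0 (xmul3 p 0) + pderiv 1 (xmul3 p 1) + pderiv 2 (xmul3 p 2)
      = Eop p + (p + p + p) := by
  show pderiv 0 (X 0 * p) + pderiv 1 (X 1 * p) + pderiv 2 (X 2 * p) = _
  rw [pderiv_mul, pderiv_mul, pderiv_mul, pderiv_X_self, pderiv_X_self, pderiv_X_self, Eop]
  ring

/-- `(P_k)³ = curl((P_{k+1})³) ⊕ x P_{k-1}` (direct sum decomposition). -/
theorem decomp_Pk3_curl_x (k : ℕ) (v : Fin 3 → MvPolynomial (Fin 3) ℝ)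
    (hv : ∀ i, (v i).totalDegree ≤ k) :
    ∃! gw : (Fin 3 → MvPolynomial (Fin 3) ℝ) × (Fin 3 → MvPolynomial (Fin 3) ℝ),
      (∃ q : Fin 3 → MvPolynomial (Fin 3) ℝ, (∀ i, (q i).totalDegree ≤ k + 1) ∧ gw.1 = pcurl3 q) ∧
      (∃ p : MvPolynomial (Fin 3) ℝ, degLE3 p ((k : ℤ) - 1) ∧ gw.2 = xmul3 p) ∧
      v = gw.1 + gw.2 := by
  set p : MvPolynomial (Fin 3) ℝ :=
    invE 3 (pderiv 0 (v 0) + pderiv 1 (v 1) + pderiv 2 (v 2)) with hpdef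
  set u : Fin 3 → MvPolynomial (Fin 3) ℝ := fun i => invE 2 (v i) with hudef
  set q : Fin 3 → MvPolynomial (Fin 3) ℝ :=
    ![X 2 * u 1 - X 1 * u 2, X 0 * u 2 - X 2 * u 0, X 1 * u 0 - X 0 * u 1] with hqdef
  have du : ∀ j i' : Fin 3, pderiv j (invE 2 (v i')) = invE 3 (pderiv j (v i')) := by
    intro j i'
    have h23 : (2:ℕ) + 1 = 3 := rfl
    rw [pderiv_invE (by norm_num) j (v i'), h23]
  have hpexp : p = invE 3 (pderiv 0 (v 0)) + invE 3 (pderiv 1 (v 1)) + invE 3 (pderiv 2 (v 2)) := by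
    rw [hpdef, invE_add, invE_add]
  have hEv : ∀ i' : Fin 3,
      X 0 * invE 3 (pderiv 0 (v i')) + X 1 * invE 3 (pderiv 1 (v i'))
        + X 2 * invE 3 (pderiv 2 (v i')) + (invE 2 (v i') + invE 2 (v i')) = v i' := by
    intro i'
    have h := key1 (c := 2) (by norm_num) (v i')
    rw [Eop, du 0 i', du 1 i', du 2 i',
      show ((2:ℕ):ℝ) • invE 2 (v i') = invE 2 (v i') + invE 2 (v i') by
        rw [show ((2:ℕ):ℝ) = 1 + 1 by norm_num, add_smul, one_smul]] at h
    exact h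
  have hq0 : q 0 = X 2 * u 1 - X 1 * u 2 := rfl
  have hq1 : q 1 = X 0 * u 2 - X 2 * u 0 := rfl
  have hq2 : q 2 = X 1 * u 0 - X 0 * u 1 := rfl
  have hu : ∀ i, u i = invE 2 (v i) := fun i => rfl
  have comp0 : v 0 = (pcurl3 q + xmul3 p) 0 := by
    have hc0 : (pcurl3 q + xmul3 p) 0 = (pderiv 1 (q 2) - pderiv 2 (q 1)) + X 0 * p := rfl
    rw [hc0, hq1, hq2, map_sub, map_sub, pderiv_mul, pderiv_mul, pderiv_mul, pderiv_mul,
      pderiv_X_self, pderiv_X_of_ne (show (0:Fin 3) ≠ 1 by decide),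
      pderiv_X_of_ne (show (0:Fin 3) ≠ 2 by decide), pderiv_X_self]
    simp only [hu, du, hpexp]
    linear_combination - hEv 0
  have comp1 : v 1 = (pcurl3 q + xmul3 p) 1 := by
    have hc1 : (pcurl3 q + xmul3 p) 1 = (pderiv 2 (q 0) - pderiv 0 (q 2)) + X 1 * p := rfl
    rw [hc1, hq0, hq2, map_sub, map_sub, pderiv_mul, pderiv_mul, pderiv_mul, pderiv_mul,
      pderiv_X_self, pderiv_X_of_ne (show (1:Fin 3) ≠ 2 by decide),
      pderiv_X_of_ne (show (1:Fin 3) ≠ 0 by decide), pderiv_X_self]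
    simp only [hu, du, hpexp]
    linear_combination - hEv 1
  have comp2 : v 2 = (pcurl3 q + xmul3 p) 2 := by
    have hc2 : (pcurl3 q + xmul3 p) 2 = (pderiv 0 (q 1) - pderiv 1 (q 0)) + X 2 * p := rfl
    rw [hc2, hq1, hq0, map_sub, map_sub, pderiv_mul, pderiv_mul, pderiv_mul, pderiv_mul,
      pderiv_X_self, pderiv_X_of_ne (show (2:Fin 3) ≠ 0 by decide),
      pderiv_X_of_ne (show (2:Fin 3) ≠ 1 by decide), pderiv_X_self]
    simp only [hu, du, hpexp]
    linear_combination - hEv 2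
  have key : v = pcurl3 q + xmul3 p := by
    funext i
    fin_cases i
    · exact comp0
    · exact comp1
    · exact comp2
  -- degree bounds
  have hule : ∀ i, (u i).totalDegree ≤ k := fun i =>
    le_trans (totalDegree_invE_le 2 (v i)) (hv i)
  have hXmul : ∀ (a b : Fin 3), (X a * u b).totalDegree ≤ k + 1 := by
    intro a b
    refine le_trans (totalDegree_mul _ _) ?_
    have := totalDegree_X (R := ℝ) a
    have := hule b
    omega
  have hqdeg : ∀ i, (q i).totalDegree ≤ k + 1 := by
    intro i
    fin_cases i
    · exact le_trans (totalDegree_sub _ _) (max_le (hXmul 2 1) (hXmul 1 2))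
    · exact le_trans (totalDegree_sub _ _) (max_le (hXmul 0 2) (hXmul 2 0))
    · exact le_trans (totalDegree_sub _ _) (max_le (hXmul 1 0) (hXmul 0 1))
  have hvdeg : ∀ i, degLE3 (v i) (k : ℤ) := fun i => Or.inr (by exact_mod_cast hv i)
  have hpdeg : degLE3 p ((k : ℤ) - 1) := by
    rw [hpdef]
    exact degLE3_invE (degLE3_add (degLE3_add (degLE3_pderiv 0 (hvdeg 0))
      (degLE3_pderiv 1 (hvdeg 1))) (degLE3_pderiv 2 (hvdeg 2)))
  refine ⟨(pcurl3 q, xmul3 p), ⟨⟨q, hqdeg, rfl⟩, ⟨p, hpdeg, rfl⟩, key⟩, ?_⟩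
  -- uniqueness
  rintro ⟨g', w'⟩ ⟨⟨q', hq'deg, hg'⟩, ⟨p', hp'deg, hw'⟩, heq⟩
  simp only at hg' hw' heq
  subst hg' hw'
  have he : pcurl3 q' + xmul3 p' = pcurl3 q + xmul3 p := heq.symm.trans key
  have h0 : pcurl3 q' 0 + xmul3 p' 0 = pcurl3 q 0 + xmul3 p 0 := congrFun he 0
  have h1 : pcurl3 q' 1 + xmul3 p' 1 = pcurl3 q 1 + xmul3 p 1 := congrFun he 1
  have h2 : pcurl3 q' 2 + xmul3 p' 2 = pcurl3 q 2 + xmul3 p 2 := congrFun he 2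
  have D0 := congrArg (pderiv 0) h0
  have D1 := congrArg (pderiv 1) h1
  have D2 := congrArg (pderiv 2) h2
  rw [map_add, map_add] at D0 D1 D2
  have HA := Div_pcurl3 q'
  have HB := Div_pcurl3 q
  have HX' := Div_xmul3 p'
  have HX := Div_xmul3 p
  have hr : Eop (p' - p) + ((p' - p) + (p' - p) + (p' - p)) = 0 := by
    rw [Eop_sub]
    linear_combination HX - HX' + D0 + D1 + D2 - HA + HB
  have hpp : p' = p := by
    have := cancel3 (p' - p) hr
    linear_combination this
  subst hpp
  have hcurl : pcurl3 q' = pcurl3 q := by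
    have := add_right_cancel he
    exact this
  rw [hcurl]
end

section
/- For every integer s ≥ 0 and every divergence-free R^3-valued polynomial vector field p_s of degree at most s, there exists a divergence-free R^3-valued polynomial q_s of degree at most s such that curl(x ∧ q_s) = p_s. -/
open MvPolynomial

/-- the divergence of a trivariate polynomial vector field -/
noncomputable def pdiv3 (v : Fin 3 → MvPolynomial (Fin 3) ℝ) : MvPolynomial (Fin 3) ℝ :=
  ∑ i, pderiv i (v i)

/-- the field `x ∧ q` -/
noncomputable def xwedge3 (q : Fin 3 → MvPolynomial (Fin 3) ℝ) : Fin 3 → MvPolynomial (Fin 3) ℝ :=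
  ![X 1 * q 2 - X 2 * q 1, X 2 * q 0 - X 0 * q 2, X 0 * q 1 - X 1 * q 0]

/-- diagonal scaling operator: divide each monomial's coefficient by (its degree + c) -/
noncomputable def Tc (c : ℕ) (p : MvPolynomial (Fin 3) ℝ) : MvPolynomial (Fin 3) ℝ :=
  p.support.sum fun m => monomial m (p.coeff m / ((∑ i, m i : ℕ) + c))

lemma Tc_coeff (c : ℕ) (p : MvPolynomial (Fin 3) ℝ) (n : Fin 3 →₀ ℕ) :
    (Tc c p).coeff n = p.coeff n / ((∑ i, n i : ℕ) + c) := by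
  classical
  rw [Tc, coeff_sum]
  simp only [coeff_monomial]
  rw [Finset.sum_ite_eq' p.support n (fun m => p.coeff m / ((∑ i, m i : ℕ) + c))]
  split_ifs with h
  · rfl
  · rw [MvPolynomial.notMem_support_iff.mp h, zero_div]

lemma Tc_add (c : ℕ) (p q : MvPolynomial (Fin 3) ℝ) :
    Tc c (p + q) = Tc c p + Tc c q := by
  ext n; simp [Tc_coeff, add_div]

lemma Tc_zero (c : ℕ) : Tc c 0 = 0 := by ext n; simp [Tc_coeff]

lemma Tc_monomial (c : ℕ) (m : Fin 3 →₀ ℕ) (a : ℝ) :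
    Tc c (monomial m a) = monomial m (a / ((∑ i, m i : ℕ) + c)) := by
  ext n
  rw [Tc_coeff, coeff_monomial, coeff_monomial]
  split_ifs with h
  · subst h; rfl
  · exact zero_div _

lemma sum_sub_single {m : Fin 3 →₀ ℕ} {j : Fin 3} (h : m j ≠ 0) :
    (∑ i, ((m - Finsupp.single j 1 : Fin 3 →₀ ℕ) i)) + 1 = ∑ i, m i := by
  classical
  have key : ∀ i, ((m - Finsupp.single j 1 : Fin 3 →₀ ℕ) i) + (if i = j then 1 else 0) = m i := by
    intro i
    rw [Finsupp.tsub_apply, Finsupp.single_apply]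
    by_cases hij : j = i
    · subst hij
      rw [if_pos rfl]
      omega
    · rw [if_neg hij, if_neg (fun h' => hij h'.symm)]
      omega
  calc (∑ i, ((m - Finsupp.single j 1 : Fin 3 →₀ ℕ) i)) + 1
      = ∑ i, (((m - Finsupp.single j 1 : Fin 3 →₀ ℕ) i) + (if i = j then 1 else 0)) := by
        rw [Finset.sum_add_distrib, Finset.sum_ite_eq' Finset.univ j fun _ => 1]
        simp
    _ = ∑ i, m i := by simp_rw [key]

lemma pderiv_Tc (c : ℕ) (j : Fin 3) (p : MvPolynomial (Fin 3) ℝ) :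
    pderiv j (Tc c p) = Tc (c + 1) (pderiv j p) := by
  induction p using MvPolynomial.induction_on' with
  | monomial m a =>
    rw [Tc_monomial, pderiv_monomial, pderiv_monomial, Tc_monomial]
    by_cases h : m j = 0
    · rw [h]; simp
    · congr 1
      have hs := sum_sub_single h
      have hcast : ((∑ i, ((m - Finsupp.single j 1 : Fin 3 →₀ ℕ) i) : ℕ) : ℝ)
            + ((c + 1 : ℕ) : ℝ)
          = ((∑ i, m i : ℕ) : ℝ) + c := by
        rw [← hs]; push_cast; ring
      rw [hcast]; ring
  | add f g hf hg => rw [Tc_add, map_add, map_add, hf, hg, Tc_add]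

lemma X_mul_monomial_sub (j : Fin 3) (m : Fin 3 →₀ ℕ) (c : ℝ) :
    X j * monomial (m - Finsupp.single j 1) (c * (m j : ℕ)) = monomial m (c * (m j : ℕ)) := by
  by_cases h : m j = 0
  · rw [h]; simp
  · rw [X, monomial_mul, one_mul]
    congr 1
    rw [add_comm, tsub_add_cancel_of_le (Finsupp.single_le_iff.mpr (Nat.one_le_iff_ne_zero.mpr h))]

lemma euler_Tc (p : MvPolynomial (Fin 3) ℝ) :
    2 * Tc 2 p + ∑ j, X j * pderiv j (Tc 2 p) = p := by
  induction p using MvPolynomial.induction_on' with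
  | monomial m a =>
    rw [Tc_monomial]
    simp only [Nat.cast_ofNat]
    have key : ∀ j : Fin 3, X j * pderiv j (monomial m (a / ((∑ i, m i : ℕ) + 2)))
        = monomial m ((a / ((∑ i, m i : ℕ) + 2)) * (m j : ℕ)) := fun j => by
      rw [pderiv_monomial, X_mul_monomial_sub]
    simp_rw [key]
    rw [← map_sum (monomial m), two_mul, ← map_add, ← map_add]
    congr 1
    rw [← Finset.mul_sum]
    have hcast : ∑ j : Fin 3, ((m j : ℕ) : ℝ) = ((∑ j, m j : ℕ) : ℝ) := by push_cast; ring
    rw [hcast]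
    have hne : ((∑ i, m i : ℕ) : ℝ) + 2 ≠ 0 := by positivity
    field_simp
    ring
  | add f g hf hg =>
    rw [Tc_add]
    simp only [map_add, mul_add, Finset.sum_add_distrib]
    calc _ = (2 * Tc 2 f + ∑ j, X j * pderiv j (Tc 2 f))
            + (2 * Tc 2 g + ∑ j, X j * pderiv j (Tc 2 g)) := by ring
    _ = f + g := by rw [hf, hg]

lemma Tc_totalDegree (c : ℕ) (p : MvPolynomial (Fin 3) ℝ) :
    (Tc c p).totalDegree ≤ p.totalDegree := by
  apply Finset.sup_mono
  intro n hn
  rw [MvPolynomial.mem_support_iff] at hn ⊢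
  intro h
  exact hn (by rw [Tc_coeff, h, zero_div])

lemma curl_xwedge_eq (v : Fin 3 → MvPolynomial (Fin 3) ℝ) (i : Fin 3) :
    pcurl3 (xwedge3 v) i
      = X i * pdiv3 v - (2 * v i + ∑ j, X j * pderiv j (v i)) := by
  have h01 : pderiv (0 : Fin 3) (X (1 : Fin 3) : MvPolynomial (Fin 3) ℝ) = 0 :=
    pderiv_X_of_ne (by decide)
  have h02 : pderiv (0 : Fin 3) (X (2 : Fin 3) : MvPolynomial (Fin 3) ℝ) = 0 :=
    pderiv_X_of_ne (by decide)
  have h10 : pderiv (1 : Fin 3) (X (0 : Fin 3) : MvPolynomial (Fin 3) ℝ) = 0 :=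
    pderiv_X_of_ne (by decide)
  have h12 : pderiv (1 : Fin 3) (X (2 : Fin 3) : MvPolynomial (Fin 3) ℝ) = 0 :=
    pderiv_X_of_ne (by decide)
  have h20 : pderiv (2 : Fin 3) (X (0 : Fin 3) : MvPolynomial (Fin 3) ℝ) = 0 :=
    pderiv_X_of_ne (by decide)
  have h21 : pderiv (2 : Fin 3) (X (1 : Fin 3) : MvPolynomial (Fin 3) ℝ) = 0 :=
    pderiv_X_of_ne (by decide)
  fin_cases i <;>
  · simp only [pcurl3, xwedge3, pdiv3, Fin.sum_univ_three, Fin.zero_eta, Fin.mk_one,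
      Fin.reduceFinMk, Matrix.cons_val_zero, Matrix.cons_val_one, Matrix.head_cons,
      Matrix.cons_val_two, Matrix.tail_cons, map_sub, pderiv_mul, pderiv_X_self,
      h01, h02, h10, h12, h20, h21, zero_mul, one_mul, mul_zero]
    ring

/-- for every divergence-free `p_s ∈ (P_s)³` there is a divergence-free
`q_s ∈ (P_s)³` with `curl(x ∧ q_s) = p_s`. -/
theorem exists_divfree_curl_xwedge (s : ℕ) (p : Fin 3 → MvPolynomial (Fin 3) ℝ)
    (hdeg : ∀ i, (p i).totalDegree ≤ s) (hdiv : pdiv3 p = 0) :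
    ∃ q : Fin 3 → MvPolynomial (Fin 3) ℝ,
      (∀ i, (q i).totalDegree ≤ s) ∧ pdiv3 q = 0 ∧ pcurl3 (xwedge3 q) = p := by
  have hq0 : pdiv3 (fun i => -(Tc 2 (p i))) = 0 := by
    have : pdiv3 (fun i => -(Tc 2 (p i))) = -(Tc 3 (pdiv3 p)) := by
      simp only [pdiv3, Fin.sum_univ_three, map_neg, pderiv_Tc]
      rw [Tc_add, Tc_add]
      ring
    rw [this, hdiv, Tc_zero, neg_zero]
  refine ⟨fun i => -(Tc 2 (p i)), fun i => ?_, hq0, ?_⟩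
  · rw [totalDegree_neg]
    exact (Tc_totalDegree 2 (p i)).trans (hdeg i)
  · funext i
    rw [curl_xwedge_eq, hq0, mul_zero]
    simp only [map_neg, mul_neg, Finset.sum_neg_distrib]
    linear_combination euler_Tc (p i)
end
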